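/- Let (h_A,φ_A) and (h_B,φ_B) be entropic functional pairs and let c_A, c_B, c_{A,B} ∈ (0,1] with c_{A,B} ≤ c_A c_B; set γ_A = arccos c_A, γ_B = arccos c_B, γ_{A,B} = arccos c_{A,B}. Define the Landau–Pollak domain D_LP = { (P_A, P_B) ∈ (0, c_A²] × (0, c_B²] : arccos √P_A + arccos √P_B ≥ γ_{A,B} }. Then the infimum over (P_A, P_B) ∈ D_LP of H^min_{(h_A,φ_A)}(P_A) + H^min_{(h_B,φ_B)}(P_B) is attained and equals D_{(h_A,φ_A)}(γ_A) + D_{(h_B,φ_B)}(γ_B) when γ_{A,B} ≤ γ_A + γ_B, and equals min_{θ ∈ [γ_A, γ_{A,B} − γ_B]} ( D_{(h_A,φ_A)}(θ) + D_{(h_B,φ_B)}(γ_{A,B} − θ) ) otherwise. -/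

import Mathlib

open scoped BigOperators

noncomputable section

/-- An entropic functional pair `(h, φ)` in the sense of Salicrú. -/
structure EntropicPair where
  phi : ℝ → ℝ
  h : ℝ → ℝ
  phi_cont : ContinuousOn phi (Set.Icc 0 1)
  h_cont : Continuous h
  phi_zero : phi 0 = 0
  norm_zero : h (phi 1) = 0
  admissible : (StrictConcaveOn ℝ (Set.Icc (0:ℝ) 1) phi ∧ StrictMono h) ∨
               (StrictConvexOn ℝ (Set.Icc (0:ℝ) 1) phi ∧ StrictAnti h)

/-- `p` is a probability vector. -/
def IsProbVec {ι : Type*} [Fintype ι] (p : ι → ℝ) : Prop :=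
  (∀ k, 0 ≤ p k) ∧ ∑ k, p k = 1

/-- The Salicrú `(h,φ)`-entropy of a probability vector. -/
noncomputable def EntropicPair.H (e : EntropicPair) {ι : Type*} [Fintype ι] (p : ι → ℝ) : ℝ :=
  e.h (∑ k, e.phi (p k))

/-- `H^min_{(h,φ)}(P) = h(⌊1/P⌋ φ(P) + φ(1 − ⌊1/P⌋P))`. -/
noncomputable def EntropicPair.Hmin (e : EntropicPair) (P : ℝ) : ℝ :=
  e.h ((⌊1 / P⌋₊ : ℝ) * e.phi P + e.phi (1 - (⌊1 / P⌋₊ : ℝ) * P))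

/-- `D_{(h,φ)}(θ) = H^min_{(h,φ)}(cos²θ)`. -/
noncomputable def EntropicPair.D (e : EntropicPair) (θ : ℝ) : ℝ :=
  e.Hmin (Real.cos θ ^ 2)

/-- The `N`-dimensional vector with first `⌊1/P⌋` components equal to `P`, the next component
(present when `⌊1/P⌋ < N`) equal to `1 − ⌊1/P⌋P`, and all remaining components zero. -/
noncomputable def wvec (N : ℕ) (P : ℝ) : Fin N → ℝ := fun k =>
  if (k : ℕ) < ⌊1 / P⌋₊ then P
  else if (k : ℕ) = ⌊1 / P⌋₊ then 1 - (⌊1 / P⌋₊ : ℝ) * P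
  else 0

/-- `p ≺ q`: `p` is majorized by `q`. (The sums of the `m` largest components of a vector
`v` coincide with the maxima, over subsets `s` of cardinality `m`, of `∑_{k∈s} v k`; this is
the standard subset-sum characterization of majorization.) -/
def Majorizes {N : ℕ} (p q : Fin N → ℝ) : Prop :=
  (∑ k, p k = ∑ k, q k) ∧
  ∀ s : Finset (Fin N), ∃ t : Finset (Fin N), t.card = s.card ∧ ∑ k ∈ s, p k ≤ ∑ k ∈ t, q k

/-! Write `H^min = h ∘ G` with `G P = ⌊1/P⌋ φ(P) + φ(1 - ⌊1/P⌋ P)`. On each piece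
`[1/(n+1), 1/n]` the function `G` agrees with `n φ(P) + φ(1 - n P)`, at both endpoints because
`φ 0 = 0`; there it is continuous and, comparing chords of the concave `φ`, antitone. Gluing the
pieces, `G` is continuous and antitone on `(0, 1]`, hence so is `H^min` (for convex `φ` apply this
to `-φ`), and `D` is monotone on `[0, π/2)`.

The substitution `P = cos² θ` turns the Landau–Pollak domain into
`{θ_A ≥ γ_A, θ_B ≥ γ_B, θ_A + θ_B ≥ γ_{A,B}}`, on which `D_A(θ_A) + D_B(θ_B)` is monotone in
each variable. Either `(γ_A, γ_B)` is feasible, or `θ_A` can be clipped to `[γ_A, γ_{A,B} - γ_B]`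
and `θ_B` lowered to `γ_{A,B} - θ_A`, leaving a continuous function on a compact interval. -/

open Real Set

theorem ConcaveOn.slope_anti_of_le {𝕜 : Type*} [Field 𝕜] [LinearOrder 𝕜] [IsStrictOrderedRing 𝕜]
    {s : Set 𝕜} {f : 𝕜 → 𝕜} (hf : ConcaveOn 𝕜 s f) {a b c d : 𝕜} (ha : a ∈ s) (hd : d ∈ s)
    (hab : a < b) (hbc : b ≤ c) (hcd : c < d) :
    (f d - f c) / (d - c) ≤ (f b - f a) / (b - a) := by
  rcases hbc.eq_or_lt with rfl | hbc
  · exact hf.slope_anti_adjacent ha hd hab hcd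
  have hb : b ∈ s := hf.1.ordConnected.out ha hd ⟨hab.le, (hbc.trans hcd).le⟩
  have hc : c ∈ s := hf.1.ordConnected.out ha hd ⟨(hab.trans hbc).le, hcd.le⟩
  exact (hf.slope_anti_adjacent hb hd hbc hcd).trans (hf.slope_anti_adjacent ha hc hab hbc)

section PhiSums

variable {φ : ℝ → ℝ}

def pieceSum (φ : ℝ → ℝ) (n : ℕ) (P : ℝ) : ℝ := n * φ P + φ (1 - n * P)

def floorSum (φ : ℝ → ℝ) (P : ℝ) : ℝ := pieceSum φ ⌊1 / P⌋₊ P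

theorem floorSum_neg (φ : ℝ → ℝ) (P : ℝ) : floorSum (-φ) P = -floorSum φ P := by
  simp only [floorSum, pieceSum, Pi.neg_apply]
  ring

theorem mem_Icc_one_div_iff {n : ℕ} (hn : 1 ≤ n) {P : ℝ} :
    P ∈ Icc (1 / ((n : ℝ) + 1)) (1 / n) ↔ 1 ≤ (n + 1) * P ∧ n * P ≤ 1 := by
  have hn : (0 : ℝ) < n := by exact_mod_cast hn
  rw [mem_Icc, div_le_iff₀' (by positivity), le_div_iff₀' hn]

theorem pieceSum_antitoneOn (hφ : ConcaveOn ℝ (Icc 0 1) φ) {n : ℕ} (hn : 1 ≤ n) :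
    AntitoneOn (pieceSum φ n) (Icc (1 / ((n : ℝ) + 1)) (1 / n)) := by
  intro P hP Q hQ hPQ
  rcases hPQ.eq_or_lt with rfl | hPQ
  · rfl
  obtain ⟨hP1, -⟩ := (mem_Icc_one_div_iff hn).1 hP
  obtain ⟨-, hQ1⟩ := (mem_Icc_one_div_iff hn).1 hQ
  have hn' : (1 : ℝ) ≤ n := by exact_mod_cast hn
  have hP0 : 0 < P := by nlinarith
  -- `1 - nQ < 1 - nP ≤ P < Q`, and the first chord is `n` times longer than the second
  have hslope := hφ.slope_anti_of_le (a := 1 - n * Q) (b := 1 - n * P) (c := P) (d := Q)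
    ⟨by linarith, by nlinarith⟩ ⟨by nlinarith, by nlinarith⟩ (by nlinarith) (by linarith) hPQ
  rw [div_le_div_iff₀ (by linarith) (by nlinarith)] at hslope
  have hchord : n * (φ Q - φ P) * (Q - P) ≤ (φ (1 - n * P) - φ (1 - n * Q)) * (Q - P) := by
    linear_combination hslope
  have := le_of_mul_le_mul_right hchord (sub_pos.2 hPQ)
  simp only [pieceSum]
  linarith

theorem pieceSum_continuousOn (hφ : ContinuousOn φ (Icc 0 1)) {n : ℕ} (hn : 1 ≤ n) :
    ContinuousOn (pieceSum φ n) (Icc (1 / ((n : ℝ) + 1)) (1 / n)) := by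
  have hn' : (1 : ℝ) ≤ n := by exact_mod_cast hn
  have hmem : ∀ P ∈ Icc (1 / ((n : ℝ) + 1)) (1 / n), P ∈ Icc 0 1 ∧ 1 - n * P ∈ Icc 0 1 := by
    intro P hP
    obtain ⟨h1, h2⟩ := (mem_Icc_one_div_iff hn).1 hP
    exact ⟨⟨by nlinarith, by nlinarith⟩, ⟨by linarith, by nlinarith⟩⟩
  exact (continuousOn_const.mul (hφ.mono fun P hP => (hmem P hP).1)).add
    (hφ.comp (by fun_prop) fun P hP => (hmem P hP).2)

theorem floorSum_eq_pieceSum (hφ0 : φ 0 = 0) {n : ℕ} (hn : 1 ≤ n) {P : ℝ}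
    (hP : P ∈ Icc (1 / ((n : ℝ) + 1)) (1 / n)) : floorSum φ P = pieceSum φ n P := by
  obtain ⟨h1, h2⟩ := (mem_Icc_one_div_iff hn).1 hP
  have hP0 : 0 < P := by nlinarith
  rcases h1.eq_or_lt with h1 | h1
  · -- at `P = 1 / (n + 1)` the floor jumps to `n + 1`, and the extra term is `φ 0`
    have hfloor : ⌊1 / P⌋₊ = n + 1 := by
      rw [h1, mul_div_cancel_right₀ _ hP0.ne']
      exact_mod_cast Nat.floor_natCast (n + 1)
    have hrest : 1 - n * P = P := by linarith
    rw [floorSum, hfloor, pieceSum, pieceSum, hrest]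
    push_cast
    rw [← h1, sub_self, hφ0]
    ring
  · have hfloor : ⌊1 / P⌋₊ = n := by
      rw [Nat.floor_eq_iff (by positivity), le_div_iff₀ hP0, div_lt_iff₀ hP0]
      exact ⟨h2, h1⟩
    rw [floorSum, hfloor]

theorem one_div_add_one_le_one (n : ℕ) : 1 / ((n : ℝ) + 1) ≤ 1 :=
  (div_le_one (by positivity)).2 (le_add_of_nonneg_left n.cast_nonneg)

theorem one_div_add_two_le_one_div_add_one (n : ℕ) : 1 / ((n : ℝ) + 1 + 1) ≤ 1 / (n + 1) := by
  gcongr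
  exact le_add_of_nonneg_right zero_le_one

theorem Icc_one_div_succ_eq_union (n : ℕ) :
    Icc (1 / ((n : ℝ) + 1 + 1)) 1 =
      Icc (1 / ((n : ℝ) + 1 + 1)) (1 / (n + 1)) ∪ Icc (1 / ((n : ℝ) + 1)) 1 :=
  (Icc_union_Icc_eq_Icc (one_div_add_two_le_one_div_add_one n) (one_div_add_one_le_one n)).symm

theorem antitoneOn_floorSum_Icc (hφ : ConcaveOn ℝ (Icc 0 1) φ) (hφ0 : φ 0 = 0) (n : ℕ) :
    AntitoneOn (floorSum φ) (Icc (1 / ((n : ℝ) + 1)) 1) := by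
  induction n with
  | zero =>
    refine Set.Subsingleton.antitoneOn _ ?_
    norm_num
  | succ n ih =>
    have hpiece := (pieceSum_antitoneOn hφ n.succ_pos).congr
      fun P hP => (floorSum_eq_pieceSum hφ0 n.succ_pos hP).symm
    rw [Nat.cast_succ] at hpiece ⊢
    rw [Icc_one_div_succ_eq_union]
    exact hpiece.union_right ih (isGreatest_Icc (one_div_add_two_le_one_div_add_one n))
      (isLeast_Icc (one_div_add_one_le_one n))

theorem continuousOn_floorSum_Icc (hφ : ContinuousOn φ (Icc 0 1)) (hφ0 : φ 0 = 0) (n : ℕ) :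
    ContinuousOn (floorSum φ) (Icc (1 / ((n : ℝ) + 1)) 1) := by
  induction n with
  | zero =>
    refine Set.Subsingleton.continuousOn ?_ _
    norm_num
  | succ n ih =>
    have hpiece := (pieceSum_continuousOn hφ n.succ_pos).congr
      fun P hP => floorSum_eq_pieceSum hφ0 n.succ_pos hP
    rw [Nat.cast_succ] at hpiece ⊢
    rw [Icc_one_div_succ_eq_union]
    exact hpiece.union_of_isClosed ih isClosed_Icc isClosed_Icc

theorem antitoneOn_floorSum (hφ : ConcaveOn ℝ (Icc 0 1) φ) (hφ0 : φ 0 = 0) :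
    AntitoneOn (floorSum φ) (Ioc 0 1) := by
  intro P hP Q hQ hPQ
  obtain ⟨n, hn⟩ := exists_nat_one_div_lt hP.1
  exact antitoneOn_floorSum_Icc hφ hφ0 n ⟨hn.le, hP.2⟩ ⟨hn.le.trans hPQ, hQ.2⟩ hPQ

theorem continuousOn_floorSum (hφ : ContinuousOn φ (Icc 0 1)) (hφ0 : φ 0 = 0) :
    ContinuousOn (floorSum φ) (Ioc 0 1) := by
  intro P hP
  obtain ⟨n, hn⟩ := exists_nat_one_div_lt hP.1
  refine (continuousOn_floorSum_Icc hφ hφ0 n P ⟨hn.le, hP.2⟩).mono_of_mem_nhdsWithin ?_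
  exact mem_nhdsWithin.2 ⟨Ioi _, isOpen_Ioi, hn, fun Q hQ => ⟨hQ.1.le, hQ.2.2⟩⟩

end PhiSums

theorem cos_sq_mem_Ioc {θ : ℝ} (hθ : θ ∈ Ico 0 (π / 2)) : cos θ ^ 2 ∈ Ioc 0 1 :=
  ⟨pow_pos (cos_pos_of_mem_Ioo ⟨by linarith [hθ.1, pi_pos], hθ.2⟩) 2,
    pow_le_one₀ (cos_nonneg_of_mem_Icc ⟨by linarith [hθ.1, pi_pos], hθ.2.le⟩) (cos_le_one θ)⟩

theorem antitoneOn_cos_sq : AntitoneOn (fun θ => cos θ ^ 2) (Icc 0 (π / 2)) :=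
  fun _ hθ _ hϑ hle => pow_le_pow_left₀ (cos_nonneg_of_mem_Icc ⟨by linarith [hϑ.1, pi_pos], hϑ.2⟩)
    (antitoneOn_cos ⟨hθ.1, by linarith [hθ.2, pi_pos]⟩ ⟨hϑ.1, by linarith [hϑ.2, pi_pos]⟩ hle) 2

namespace EntropicPair

variable (e : EntropicPair)

theorem Hmin_eq_h_floorSum (P : ℝ) : e.Hmin P = e.h (floorSum e.phi P) := rfl

theorem antitoneOn_Hmin : AntitoneOn e.Hmin (Ioc 0 1) := by
  intro P hP Q hQ hPQ
  simp only [Hmin_eq_h_floorSum]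
  rcases e.admissible with ⟨hconc, hmono⟩ | ⟨hconv, hanti⟩
  · exact hmono.monotone (antitoneOn_floorSum hconc.concaveOn e.phi_zero hP hQ hPQ)
  · have := antitoneOn_floorSum hconv.convexOn.neg (by simp [e.phi_zero]) hP hQ hPQ
    rw [floorSum_neg, floorSum_neg, neg_le_neg_iff] at this
    exact hanti.antitone this

theorem continuousOn_Hmin : ContinuousOn e.Hmin (Ioc 0 1) :=
  e.h_cont.comp_continuousOn (continuousOn_floorSum e.phi_cont e.phi_zero)

theorem monotoneOn_D : MonotoneOn e.D (Ico 0 (π / 2)) := fun _ hθ _ hϑ hle =>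
  e.antitoneOn_Hmin (cos_sq_mem_Ioc hϑ) (cos_sq_mem_Ioc hθ)
    (antitoneOn_cos_sq (Ico_subset_Icc_self hθ) (Ico_subset_Icc_self hϑ) hle)

theorem continuousOn_D : ContinuousOn e.D (Ico 0 (π / 2)) :=
  e.continuousOn_Hmin.comp (by fun_prop) fun _ => cos_sq_mem_Ioc

end EntropicPair

theorem arccos_mem_Ico_of_pos {c : ℝ} (hc : 0 < c) : arccos c ∈ Ico 0 (π / 2) :=
  ⟨arccos_nonneg c, arccos_lt_pi_div_two.2 hc⟩

theorem arccos_sqrt_mem_Ico {c P : ℝ} (hc : 0 ≤ c) (hP : P ∈ Ioc 0 (c ^ 2)) :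
    arccos √P ∈ Ico (arccos c) (π / 2) :=
  ⟨arccos_le_arccos (by simpa only [sqrt_sq hc] using sqrt_le_sqrt hP.2),
    arccos_lt_pi_div_two.2 (sqrt_pos.2 hP.1)⟩

theorem cos_arccos_sqrt_sq {P : ℝ} (h0 : 0 ≤ P) (h1 : P ≤ 1) : cos (arccos √P) ^ 2 = P := by
  rw [cos_arccos (by linarith [sqrt_nonneg P]) (sqrt_le_one.2 h1), sq_sqrt h0]

theorem cos_sq_mem_Ioc_sq {c θ : ℝ} (hc : c ≤ 1) (hθ : θ ∈ Ico (arccos c) (π / 2)) :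
    cos θ ^ 2 ∈ Ioc 0 (c ^ 2) := by
  have hc0 : 0 < c := arccos_lt_pi_div_two.1 (hθ.1.trans_lt hθ.2)
  have hθ0 : θ ∈ Ico 0 (π / 2) := ⟨(arccos_nonneg c).trans hθ.1, hθ.2⟩
  refine ⟨(cos_sq_mem_Ioc hθ0).1, ?_⟩
  have : cos θ ^ 2 ≤ cos (arccos c) ^ 2 := antitoneOn_cos_sq
    ⟨arccos_nonneg c, arccos_le_pi_div_two.2 hc0.le⟩ (Ico_subset_Icc_self hθ0) hθ.1
  rwa [cos_arccos (by linarith) hc] at this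

theorem arccos_sqrt_cos_sq {θ : ℝ} (hθ : θ ∈ Icc 0 (π / 2)) : arccos √(cos θ ^ 2) = θ := by
  rw [sqrt_sq (cos_nonneg_of_mem_Icc ⟨by linarith [hθ.1, pi_pos], hθ.2⟩),
    arccos_cos hθ.1 (by linarith [hθ.2, pi_pos])]

theorem landauPollak_set_eq_angle_set (F G : ℝ → ℝ) {cA cB : ℝ} (hcA : cA ∈ Ioc 0 1)
    (hcB : cB ∈ Ioc 0 1) (γ : ℝ) :
    {x | ∃ PA PB : ℝ, PA ∈ Ioc 0 (cA ^ 2) ∧ PB ∈ Ioc 0 (cB ^ 2) ∧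
        arccos √PA + arccos √PB ≥ γ ∧ x = F PA + G PB} =
      {x | ∃ θA θB : ℝ, θA ∈ Ico (arccos cA) (π / 2) ∧ θB ∈ Ico (arccos cB) (π / 2) ∧
        γ ≤ θA + θB ∧ x = F (cos θA ^ 2) + G (cos θB ^ 2)} := by
  have hsq : ∀ {c P : ℝ}, c ∈ Ioc 0 1 → P ∈ Ioc 0 (c ^ 2) → cos (arccos √P) ^ 2 = P :=
    fun hc hP => cos_arccos_sqrt_sq hP.1.le (hP.2.trans (pow_le_one₀ hc.1.le hc.2))
  have hangle : ∀ {c θ : ℝ}, θ ∈ Ico (arccos c) (π / 2) → arccos √(cos θ ^ 2) = θ :=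
    fun hθ => arccos_sqrt_cos_sq ⟨(arccos_nonneg _).trans hθ.1, hθ.2.le⟩
  ext x
  constructor
  · rintro ⟨PA, PB, hPA, hPB, hLP, rfl⟩
    exact ⟨_, _, arccos_sqrt_mem_Ico hcA.1.le hPA, arccos_sqrt_mem_Ico hcB.1.le hPB, hLP,
      by rw [hsq hcA hPA, hsq hcB hPB]⟩
  · rintro ⟨θA, θB, hθA, hθB, hLP, rfl⟩
    exact ⟨_, _, cos_sq_mem_Ioc_sq hcA.2 hθA, cos_sq_mem_Ioc_sq hcB.2 hθB,
      by rwa [hangle hθA, hangle hθB], rfl⟩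

section AngleSums

variable {f g : ℝ → ℝ} {a b c L : ℝ}

theorem isLeast_angle_sums_of_le_add (hf : MonotoneOn f (Ico a L)) (hg : MonotoneOn g (Ico b L))
    (ha : a < L) (hb : b < L) (hc : c ≤ a + b) :
    IsLeast {x | ∃ s t : ℝ, s ∈ Ico a L ∧ t ∈ Ico b L ∧ c ≤ s + t ∧ x = f s + g t}
      (f a + g b) := by
  refine ⟨⟨a, b, left_mem_Ico.2 ha, left_mem_Ico.2 hb, hc, rfl⟩, ?_⟩
  rintro _ ⟨s, t, hs, ht, -, rfl⟩
  exact add_le_add (hf (left_mem_Ico.2 ha) hs hs.1) (hg (left_mem_Ico.2 hb) ht ht.1)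

theorem isLeast_angle_sums_of_add_le (hf : MonotoneOn f (Ico a L)) (hg : MonotoneOn g (Ico b L))
    (hfc : ContinuousOn f (Icc a (c - b))) (hgc : ContinuousOn g (Icc b (c - a)))
    (hc : a + b ≤ c) (hbL : c - b < L) (haL : c - a < L) :
    IsLeast {x | ∃ s t : ℝ, s ∈ Ico a L ∧ t ∈ Ico b L ∧ c ≤ s + t ∧ x = f s + g t}
      (sInf ((fun θ => f θ + g (c - θ)) '' Icc a (c - b))) := by
  set F := fun θ => f θ + g (c - θ)
  have hFc : ContinuousOn F (Icc a (c - b)) :=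
    hfc.add (hgc.comp (by fun_prop) fun θ hθ => ⟨by linarith [hθ.2], by linarith [hθ.1]⟩)
  obtain ⟨θ₀, hθ₀, hmin⟩ := isCompact_Icc.exists_isMinOn (nonempty_Icc.2 (by linarith)) hFc
  rw [IsLeast.csInf_eq ⟨mem_image_of_mem F hθ₀, forall_mem_image.2 hmin⟩]
  refine ⟨⟨θ₀, c - θ₀, ⟨hθ₀.1, by linarith [hθ₀.2]⟩, ⟨by linarith [hθ₀.2], by linarith [hθ₀.1]⟩,
    by linarith, rfl⟩, ?_⟩
  rintro _ ⟨s, t, hs, ht, hst, rfl⟩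
  -- clipping `s` at `c - b` keeps the pair feasible and decreases both summands
  set θ := min s (c - b)
  have hθ : θ ∈ Icc a (c - b) := ⟨le_min hs.1 (by linarith), min_le_right _ _⟩
  have ht' : c - t ≤ θ := le_min (by linarith) (by linarith [ht.1])
  calc F θ₀ ≤ F θ := hmin hθ
    _ ≤ f s + g t := add_le_add (hf ⟨hθ.1, hθ.2.trans_lt hbL⟩ hs (min_le_left _ _))
      (hg ⟨by linarith [hθ.2], by linarith [hθ.1]⟩ ht (by linarith))

end AngleSums

theorem min_hmin_sum_landau_pollak_general (eA eB : EntropicPair)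
    (cA cB cAB : ℝ) (hcA : cA ∈ Set.Ioc (0:ℝ) 1) (hcB : cB ∈ Set.Ioc (0:ℝ) 1)
    (hcAB : cAB ∈ Set.Ioc (0:ℝ) 1)
    (γA γB γAB : ℝ) (hγA : γA = Real.arccos cA) (hγB : γB = Real.arccos cB)
    (hγAB : γAB = Real.arccos cAB) :
    IsLeast
      { x : ℝ | ∃ PA PB : ℝ, PA ∈ Set.Ioc 0 (cA ^ 2) ∧ PB ∈ Set.Ioc 0 (cB ^ 2) ∧
          Real.arccos (Real.sqrt PA) + Real.arccos (Real.sqrt PB) ≥ γAB ∧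
          x = eA.Hmin PA + eB.Hmin PB }
      (if γAB ≤ γA + γB then eA.D γA + eB.D γB
       else sInf ((fun θ => eA.D θ + eB.D (γAB - θ)) '' Set.Icc γA (γAB - γB))) := by
  obtain ⟨hγA0, hγAπ⟩ := hγA ▸ arccos_mem_Ico_of_pos hcA.1
  obtain ⟨hγB0, hγBπ⟩ := hγB ▸ arccos_mem_Ico_of_pos hcB.1
  obtain ⟨-, hγABπ⟩ := hγAB ▸ arccos_mem_Ico_of_pos hcAB.1
  rw [landauPollak_set_eq_angle_set _ _ hcA hcB, ← hγA, ← hγB]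
  have hDA := eA.monotoneOn_D.mono (Ico_subset_Ico_left hγA0)
  have hDB := eB.monotoneOn_D.mono (Ico_subset_Ico_left hγB0)
  split_ifs with hcase
  · exact isLeast_angle_sums_of_le_add hDA hDB hγAπ hγBπ hcase
  · refine isLeast_angle_sums_of_add_le hDA hDB (eA.continuousOn_D.mono ?_)
      (eB.continuousOn_D.mono ?_) (by linarith) (by linarith) (by linarith)
    · exact fun θ hθ => ⟨hγA0.trans hθ.1, by linarith [hθ.2]⟩
    · exact fun θ hθ => ⟨hγB0.trans hθ.1, by linarith [hθ.2]⟩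

/-- Minimization of the sum of minimal `(h,φ)`-entropies over the
Landau–Pollak domain: the infimum is attained and equals `D_A(γ_A) + D_B(γ_B)` when
`γ_{A,B} ≤ γ_A + γ_B`, and `min_{θ ∈ [γ_A, γ_{A,B}−γ_B]} (D_A(θ) + D_B(γ_{A,B}−θ))`
otherwise. -/
theorem min_hmin_sum_landau_pollak (eA eB : EntropicPair)
    (cA cB cAB : ℝ) (hcA : cA ∈ Set.Ioc (0:ℝ) 1) (hcB : cB ∈ Set.Ioc (0:ℝ) 1)
    (hcAB : cAB ∈ Set.Ioc (0:ℝ) 1) (hle : cAB ≤ cA * cB)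
    (γA γB γAB : ℝ) (hγA : γA = Real.arccos cA) (hγB : γB = Real.arccos cB)
    (hγAB : γAB = Real.arccos cAB) :
    IsLeast
      { x : ℝ | ∃ PA PB : ℝ, PA ∈ Set.Ioc 0 (cA ^ 2) ∧ PB ∈ Set.Ioc 0 (cB ^ 2) ∧
          Real.arccos (Real.sqrt PA) + Real.arccos (Real.sqrt PB) ≥ γAB ∧
          x = eA.Hmin PA + eB.Hmin PB }
      (if γAB ≤ γA + γB then eA.D γA + eB.D γB
       else sInf ((fun θ => eA.D θ + eB.D (γAB - θ)) '' Set.Icc γA (γAB - γB))) :=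
  min_hmin_sum_landau_pollak_general eA eB cA cB cAB hcA hcB hcAB γA γB γAB hγA hγB hγAB
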